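/- Let T be a set of finite binary strings that has computable (decidable) membership, is closed under taking prefixes, and has bounded width, i.e., there is a constant k such that for every n, T contains at most k strings of length n. Then every path of T is computable, where a path is a function A : ℕ → Bool all of whose finite initial segments belong to T. -/

import Mathlib

open Filter

/-- Partial density `ρ_n(S) = |S ∩ [0,n)| / n` (as a real number). -/
noncomputable def pden (S : Set ℕ) (n : ℕ) : ℝ := ((S ∩ Set.Iio n).ncard : ℝ) / n

/-- Partial functions `ℕ →. ℕ` computable relative to an oracle `O : ℕ → ℕ`
(oracle version of `Nat.Partrec`). -/
inductive RecursiveIn' (O : ℕ → ℕ) : (ℕ →. ℕ) → Prop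
  | zero : RecursiveIn' O (pure 0)
  | succ : RecursiveIn' O ↑Nat.succ
  | left : RecursiveIn' O ↑fun n : ℕ => n.unpair.1
  | right : RecursiveIn' O ↑fun n : ℕ => n.unpair.2
  | oracle : RecursiveIn' O ↑O
  | pair {f g} : RecursiveIn' O f → RecursiveIn' O g →
      RecursiveIn' O fun n => Nat.pair <$> f n <*> g n
  | comp {f g} : RecursiveIn' O f → RecursiveIn' O g →
      RecursiveIn' O fun n => g n >>= f
  | prec {f g} : RecursiveIn' O f → RecursiveIn' O g →
      RecursiveIn' O (Nat.unpaired fun a n =>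
        n.rec (f a) fun y IH => do let i ← IH; g (Nat.pair a (Nat.pair y i)))
  | rfind {f} : RecursiveIn' O f →
      RecursiveIn' O fun a => Nat.rfind fun n => (fun m => m = 0) <$> f (Nat.pair a n)

open Classical in
/-- Characteristic function of a set of naturals. -/
noncomputable def chi (A : Set ℕ) : ℕ → ℕ := fun n => if n ∈ A then 1 else 0

/-- `f ≤_T A`: the function `f` is computable relative to the set `A`. -/
def FunLeT (f : ℕ → ℕ) (A : Set ℕ) : Prop := RecursiveIn' (chi A) ↑f

/-- `S ≤_T A`: the set `S` is computable relative to the set `A` (Turing reducibility). -/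
def SetLeT (S A : Set ℕ) : Prop := RecursiveIn' (chi A) ↑(chi S)

/-- `S ≡_T A`: Turing equivalence of sets. -/
def SetEquivT (S A : Set ℕ) : Prop := SetLeT S A ∧ SetLeT A S

/-- `S` has intrinsic density 0: every computable injection samples `S` with density 0. -/
def ID0 (S : Set ℕ) : Prop :=
  ∀ p : ℕ → ℕ, Computable p → Function.Injective p →
    Tendsto (fun n => pden (p ⁻¹' S) n) atTop (nhds 0)

/-- `S` has intrinsic lower density 0. -/
def ILD0 (S : Set ℕ) : Prop :=
  ∀ p : ℕ → ℕ, Computable p → Function.Injective p →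
    liminf (fun n => pden (p ⁻¹' S) n) atTop = 0

/-- `A` is weakly computably traceable. -/
def WCT (A : Set ℕ) : Prop :=
  ∃ h : ℕ → ℕ, Computable h ∧ ∀ f : ℕ → ℕ, FunLeT f A →
    ∃ V : ℕ → Finset ℕ, Computable V ∧ (∀ n, (V n).card ≤ h n) ∧
      ∃ᶠ n in atTop, f n ∈ V n

/-- `g` dominates every computable function. -/
def Dominant (g : ℕ → ℕ) : Prop :=
  ∀ f : ℕ → ℕ, Computable f → ∀ᶠ n in atTop, f n < g n

/-- `f` is diagonally non-computable. -/
def DNC (f : ℕ → ℕ) : Prop :=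
  ∀ e : ℕ, ∀ y ∈ (Denumerable.ofNat Nat.Partrec.Code e).eval e, f e ≠ y



namespace Stmt1Aux

/-- `s` has an extension by `d` more bits inside `T`. -/
def ext (T : Set (List Bool)) (s : List Bool) (d : ℕ) : Prop :=
  ∃ u : List Bool, u.length = d ∧ s ++ u ∈ T

/-- `s` has arbitrarily long extensions inside `T`. -/
def Einf (T : Set (List Bool)) (s : List Bool) : Prop := ∀ d, ext T s d

variable {T : Set (List Bool)}
variable (hpref : ∀ s ∈ T, ∀ t : List Bool, t <+: s → t ∈ T)

include hpref in
theorem ext_mono {s : List Bool} {d e : ℕ} (h : ext T s e) (hde : d ≤ e) : ext T s d := by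
  obtain ⟨u, hu, huT⟩ := h
  refine ⟨u.take d, by simp [hu, hde], hpref _ huT _ ?_⟩
  exact ⟨u.drop d, by simp⟩

theorem Einf.mem {s : List Bool} (h : Einf T s) : s ∈ T := by
  obtain ⟨u, hu, huT⟩ := h 0
  rw [List.length_eq_zero_iff] at hu
  simpa [hu] using huT

include hpref in
theorem Einf.child {s : List Bool} (h : Einf T s) :
    Einf T (s ++ [false]) ∨ Einf T (s ++ [true]) := by
  by_contra hc
  push_neg at hc
  obtain ⟨h0, h1⟩ := hc
  simp only [Einf, not_forall] at h0 h1
  obtain ⟨d0, hd0⟩ := h0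
  obtain ⟨d1, hd1⟩ := h1
  obtain ⟨u, hu, huT⟩ := h (1 + max d0 d1)
  match u, hu with
  | [], hu => simp at hu; omega
  | b :: u, hu =>
    have hext : ext T (s ++ [b]) (max d0 d1) :=
      ⟨u, by simp at hu; omega, by simpa using huT⟩
    cases b
    · exact hd0 (ext_mono hpref hext (le_max_left _ _))
    · exact hd1 (ext_mono hpref hext (le_max_right _ _))

theorem Einf_path (A : ℕ → Bool) (hpath : ∀ n : ℕ, (List.range n).map A ∈ T) (n : ℕ) :
    Einf T ((List.range n).map A) := by
  intro d
  refine ⟨((List.range (n + d)).map A).drop n, by simp, ?_⟩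
  have : (List.range n).map A ++ ((List.range (n + d)).map A).drop n
      = (List.range (n + d)).map A := by
    conv_lhs => rw [show (List.range n).map A = ((List.range (n+d)).map A).take n by
      rw [← List.map_take, List.take_range, Nat.min_eq_left (by omega)]]
    exact List.take_append_drop n _
  rw [this]; exact hpath _

/-- Level-`n` strings with arbitrarily long extensions in `T`. -/
def E (T : Set (List Bool)) (n : ℕ) : Set (List Bool) := {s | s.length = n ∧ Einf T s}

theorem E_finite (n : ℕ) : (E T n).Finite :=
  (List.finite_length_eq Bool n).subset fun _ h => h.1

theorem E_card_le (k : ℕ) (hwidth : ∀ n : ℕ, {s ∈ T | s.length = n}.ncard ≤ k) (n : ℕ) :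
    (E T n).ncard ≤ k := by
  refine le_trans (Set.ncard_le_ncard ?_ ((List.finite_length_eq Bool n).subset
    (fun _ h => h.2))) (hwidth n)
  rintro s ⟨hl, hE⟩
  exact ⟨hE.mem, hl⟩

open Classical in
/-- The canonical extending child. -/
noncomputable def F (T : Set (List Bool)) (s : List Bool) : List Bool :=
  if Einf T (s ++ [false]) then s ++ [false] else s ++ [true]

include hpref in
theorem F_mem {n : ℕ} {s : List Bool} (hs : s ∈ E T n) : F T s ∈ E T (n + 1) := by
  unfold F
  split
  · exact ⟨by simp [hs.1], by assumption⟩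
  · rcases hs.2.child hpref with h | h
    · tauto
    · exact ⟨by simp [hs.1], h⟩

theorem F_dropLast (s : List Bool) : (F T s).dropLast = s := by
  unfold F; split <;> simp

include hpref in
theorem card_mono (n : ℕ) : (E T n).ncard ≤ (E T (n + 1)).ncard := by
  rw [← Set.ncard_image_of_injOn (f := F T)
    (fun s hs t ht hst => by rw [← F_dropLast (T := T) s, hst, F_dropLast])]
  exact Set.ncard_le_ncard (fun x ⟨s, hs, hx⟩ => hx ▸ F_mem hpref hs) (E_finite (n + 1))

include hpref in
theorem card_succ_of_split {n : ℕ} {s : List Bool} (hs : s ∈ E T n)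
    (h0 : Einf T (s ++ [false])) (h1 : Einf T (s ++ [true])) :
    (E T n).ncard + 1 ≤ (E T (n + 1)).ncard := by
  have hins : insert (s ++ [true]) (F T '' E T n) ⊆ E T (n + 1) := by
    rintro x (rfl | ⟨t, ht, rfl⟩)
    · exact ⟨by simp [hs.1], h1⟩
    · exact F_mem hpref ht
  have hnotmem : s ++ [true] ∉ F T '' E T n := by
    rintro ⟨t, ht, hFt⟩
    have : t = s := by rw [← F_dropLast (T := T) t, hFt]; simp
    subst this
    unfold F at hFt
    rw [if_pos h0] at hFt
    simp at hFt
  calc (E T n).ncard + 1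
      = (insert (s ++ [true]) (F T '' E T n)).ncard := by
        rw [Set.ncard_insert_of_notMem hnotmem (((E_finite n).image _))]
        rw [Set.ncard_image_of_injOn
          (fun a ha b hb hab => by rw [← F_dropLast (T := T) a, hab, F_dropLast])]
    _ ≤ (E T (n + 1)).ncard := Set.ncard_le_ncard hins (E_finite (n + 1))

include hpref in
/-- There is a level beyond which no node with arbitrarily long extensions splits. -/
theorem exists_stable (k : ℕ) (hwidth : ∀ n : ℕ, {s ∈ T | s.length = n}.ncard ≤ k) :
    ∃ n₁ : ℕ, ∀ n ≥ n₁, ∀ s ∈ E T n,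
    ¬(Einf T (s ++ [false]) ∧ Einf T (s ++ [true])) := by
  have hbdd : BddAbove (Set.range fun n => (E T n).ncard) := by
    refine ⟨k, ?_⟩; rintro x ⟨n, rfl⟩; exact E_card_le k hwidth n
  have hmem := Nat.sSup_mem (s := Set.range fun n => (E T n).ncard) ⟨_, ⟨0, rfl⟩⟩ hbdd
  obtain ⟨n₁, hn₁⟩ := hmem
  refine ⟨n₁, fun n hn s hs ⟨h0, h1⟩ => ?_⟩
  have hmono : ∀ m m', m ≤ m' → (E T m).ncard ≤ (E T m').ncard := by
    intro m m' hmm'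
    induction m' with
    | zero => simp_all
    | succ m' ih =>
      rcases Nat.lt_or_ge m (m' + 1) with h | h
      · exact le_trans (ih (by omega)) (card_mono hpref m')
      · have : m = m' + 1 := by omega
        simp [this]
  have h2 := card_succ_of_split hpref hs h0 h1
  have h3 : (E T (n + 1)).ncard ≤ (E T n₁).ncard := by
    have h := le_csSup hbdd ⟨n + 1, rfl⟩
    simpa [← hn₁] using h
  have h4 := hmono n₁ n hn
  omega

end Stmt1Aux

namespace Stmt1Aux2

/-- All binary strings of length `d`. -/
def cand : ℕ → List (List Bool) :=
  fun d => Nat.rec [[]] (fun _ l => l.map (List.cons false) ++ l.map (List.cons true)) d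

theorem mem_cand {d : ℕ} {u : List Bool} : u ∈ cand d ↔ u.length = d := by
  induction d generalizing u with
  | zero => cases u <;> simp [cand]
  | succ d ih =>
    show u ∈ (cand d).map _ ++ (cand d).map _ ↔ _
    cases u with
    | nil => simp
    | cons b v =>
      simp only [List.mem_append, List.mem_map, List.length_cons]
      constructor
      · rintro (⟨w, hw, h⟩ | ⟨w, hw, h⟩) <;>
          (injection h with h1 h2; subst h2; simp [ih.1 hw])
      · intro h
        cases b
        · exact Or.inl ⟨v, ih.2 (by omega), rfl⟩
        · exact Or.inr ⟨v, ih.2 (by omega), rfl⟩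

theorem cand_primrec : Primrec cand := by
  have : Primrec₂ fun (_ : ℕ) (l : List (List Bool)) =>
      l.map (List.cons false) ++ l.map (List.cons true) :=
    (Primrec.list_append.comp
      (Primrec.list_map Primrec.snd ((Primrec.list_cons.comp (Primrec.const false)
        Primrec.snd).to₂))
      (Primrec.list_map Primrec.snd ((Primrec.list_cons.comp (Primrec.const true)
        Primrec.snd).to₂))).to₂
  exact Primrec.nat_rec₁ _ this

variable (χ : List Bool → Bool)

/-- Does some element `u` of `l` satisfy `χ (s ++ u)`? -/
def anyB (s : List Bool) (l : List (List Bool)) : Bool :=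
  Nat.rec false (fun i acc => acc || χ (s ++ (l[i]?).getD [])) l.length

theorem anyB_eq_true {s : List Bool} {l : List (List Bool)} :
    anyB χ s l = true ↔ ∃ u ∈ l, χ (s ++ u) = true := by
  have key : ∀ n : ℕ, (Nat.rec false (fun i acc => acc || χ (s ++ (l[i]?).getD []))
      n : Bool) = true ↔ ∃ i < n, χ (s ++ (l[i]?).getD []) = true := by
    intro n
    induction n with
    | zero => simp
    | succ n ih =>
      show (_ || _) = true ↔ _
      rw [Bool.or_eq_true, ih]
      constructor
      · rintro (⟨i, hi, h⟩ | h)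
        · exact ⟨i, by omega, h⟩
        · exact ⟨n, by omega, h⟩
      · rintro ⟨i, hi, h⟩
        rcases Nat.lt_or_ge i n with h' | h'
        · exact Or.inl ⟨i, h', h⟩
        · have : i = n := by omega
          exact Or.inr (this ▸ h)
  rw [anyB, key]
  constructor
  · rintro ⟨i, hi, h⟩
    exact ⟨(l[i]?).getD [], by
      rw [List.getElem?_eq_getElem hi]
      exact List.getElem_mem hi, h⟩
  · rintro ⟨u, hu, h⟩
    obtain ⟨i, hi, rfl⟩ := List.mem_iff_getElem.mp hu
    exact ⟨i, hi, by rwa [List.getElem?_eq_getElem hi]⟩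

variable {χ} (hχ : Computable χ)

include hχ in
theorem anyB_computable : Computable fun p : List Bool × List (List Bool) => anyB χ p.1 p.2 := by
  have := Computable.nat_rec (α := List Bool × List (List Bool)) (σ := Bool)
    (f := fun p => p.2.length) (g := fun _ => false)
    (h := fun p q => q.2 || χ (p.1 ++ (p.2[q.1]?).getD []))
    (Computable.list_length.comp Computable.snd) (Computable.const false)
    (Computable₂.mk (by
      have hc : Computable fun x : (List Bool × List (List Bool)) × ℕ × Bool => x.2.2 :=
        Computable.snd.comp Computable.snd
      have hg : Computable fun x : (List Bool × List (List Bool)) × ℕ × Bool =>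
          χ (x.1.1 ++ (x.1.2[x.2.1]?).getD []) := by
        refine hχ.comp (Computable.list_append.comp (Computable.fst.comp Computable.fst) ?_)
        exact Computable.option_getD
          (Computable.list_getElem?.comp (Computable.snd.comp Computable.fst)
            (Computable.fst.comp Computable.snd)) (Computable.const [])
      have := Computable.cond hc (Computable.const true) hg
      exact this.of_eq fun x => by cases x.2.2 <;> simp))
  exact this

variable (χ) in
/-- Does `s` have an extension by `d` bits satisfying `χ`? -/
def extB (s : List Bool) (d : ℕ) : Bool := anyB χ s (cand d)

set_option maxHeartbeats 1000000 in
include hχ in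
theorem extB_computable : Computable fun p : List Bool × ℕ => extB χ p.1 p.2 :=
  (anyB_computable hχ).comp
    (Computable.pair Computable.fst (cand_primrec.to_comp.comp Computable.snd))

variable (χ) in
/-- One step of the path-following algorithm. -/
def step (s : List Bool) : Part (List Bool) :=
  (Nat.rfind fun d =>
      Part.some (!(extB χ (s ++ [false]) d && extB χ (s ++ [true]) d))).map
    fun d => s ++ [extB χ (s ++ [true]) d]

set_option maxHeartbeats 1000000 in
include hχ in
theorem step_partrec : Partrec (step χ) := by
  have hfalse : Computable fun p : List Bool × ℕ => extB χ (p.1 ++ [false]) p.2 :=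
    (extB_computable hχ).comp (Computable.pair
      (Computable.list_concat.comp Computable.fst (Computable.const false)) Computable.snd)
  have htrue : Computable fun p : List Bool × ℕ => extB χ (p.1 ++ [true]) p.2 :=
    (extB_computable hχ).comp (Computable.pair
      (Computable.list_concat.comp Computable.fst (Computable.const true)) Computable.snd)
  have hb : Computable fun p : List Bool × ℕ =>
      (!(extB χ (p.1 ++ [false]) p.2 && extB χ (p.1 ++ [true]) p.2)) := by
    have hand : Computable fun p : List Bool × ℕ =>
        (extB χ (p.1 ++ [false]) p.2 && extB χ (p.1 ++ [true]) p.2) :=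
      (Computable.cond hfalse htrue (Computable.const false)).of_eq fun p => by
        cases extB χ (p.1 ++ [false]) p.2 <;> simp
    exact (Computable.cond hand (Computable.const false) (Computable.const true)).of_eq
      fun p => by cases (extB χ (p.1 ++ [false]) p.2 && extB χ (p.1 ++ [true]) p.2) <;> simp
  have hrfind : Partrec fun s : List Bool => Nat.rfind fun d =>
      Part.some (!(extB χ (s ++ [false]) d && extB χ (s ++ [true]) d)) := by
    refine Partrec.rfind (p := fun (s : List Bool) (d : ℕ) =>
      Part.some (!(extB χ (s ++ [false]) d && extB χ (s ++ [true]) d))) ?_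
    exact Computable₂.partrec₂ (Computable₂.mk hb)
  refine Partrec.map hrfind (Computable₂.mk ?_)
  exact Computable.list_concat.comp Computable.fst
    (Computable.cond (htrue.of_eq fun p => rfl) (Computable.const true) (Computable.const false)
      |>.of_eq fun p => by cases h : extB χ (p.1 ++ [true]) p.2 <;> simp [h])

variable (χ) in
/-- Iterating the step function from seed `σ₀`. -/
def L (σ₀ : List Bool) : ℕ → Part (List Bool) :=
  fun n => Nat.rec (Part.some σ₀) (fun _ IH => IH.bind fun i => step χ i) n

set_option maxHeartbeats 1000000 in
include hχ in
theorem L_partrec (σ₀ : List Bool) : Partrec (L χ σ₀) := by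
  have := Partrec.nat_rec (α := ℕ) (σ := List Bool) (f := id)
    (g := fun _ => Part.some σ₀) (h := fun _ p => step χ p.2)
    Computable.id (Partrec.const' _)
    (((step_partrec hχ).comp (Computable.snd.comp Computable.snd)) :
      Partrec fun q : ℕ × (ℕ × List Bool) => step χ q.2.2)
  exact this.of_eq fun n => rfl

end Stmt1Aux2


theorem stmt1 (T : Set (List Bool)) (hdec : ComputablePred (· ∈ T))
    (hpref : ∀ s ∈ T, ∀ t : List Bool, t <+: s → t ∈ T)
    (k : ℕ) (hwidth : ∀ n : ℕ, {s ∈ T | s.length = n}.ncard ≤ k)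
    (A : ℕ → Bool) (hpath : ∀ n : ℕ, (List.range n).map A ∈ T) :
    Computable A := by
  classical
  open Stmt1Aux Stmt1Aux2 in
  obtain ⟨χ, hχ, hχT⟩ := ComputablePred.computable_iff.mp hdec
  have hχ_iff : ∀ t : List Bool, χ t = true ↔ t ∈ T := by
    intro t
    have h2 := congrFun hχT t
    simp only [eq_iff_iff] at h2
    exact h2.symm
  have extB_iff : ∀ (s : List Bool) (d : ℕ), extB χ s d = true ↔ ext T s d := by
    intro s d
    rw [extB, anyB_eq_true]
    constructor
    · rintro ⟨u, hu, h⟩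
      exact ⟨u, mem_cand.mp hu, (hχ_iff _).mp h⟩
    · rintro ⟨u, hu, h⟩
      exact ⟨u, mem_cand.mpr hu, (hχ_iff _).mpr h⟩
  obtain ⟨n₁, hstable⟩ := exists_stable hpref k hwidth
  set σ₀ : List Bool := (List.range n₁).map A with hσ₀
  -- membership of the path initial segments in the iterated step function
  have memL : ∀ n : ℕ, (List.range (n₁ + n)).map A ∈ L χ σ₀ n := by
    intro n
    induction n with
    | zero => simp [L, σ₀]
    | succ n ih =>
      have hbind : L χ σ₀ (n + 1) = (L χ σ₀ n).bind fun i => step χ i := rfl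
      rw [hbind]
      refine Part.mem_bind_iff.mpr ⟨_, ih, ?_⟩
      -- show the step applied to A↾(n₁+n) yields A↾(n₁+n+1)
      set s : List Bool := (List.range (n₁ + n)).map A with hs
      set b : Bool := A (n₁ + n) with hb
      have hsucc : (List.range (n₁ + n + 1)).map A = s ++ [b] := by
        rw [List.range_succ, List.map_append]; rfl
      have hsE : s ∈ E T (n₁ + n) := ⟨by simp [hs], Einf_path A hpath _⟩
      have hchild : Einf T (s ++ [b]) := by
        rw [← hsucc]; exact Einf_path A hpath _
      have hnotboth := hstable (n₁ + n) (by omega) s hsE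
      -- termination of the search
      have hterm : ∃ d, (!(extB χ (s ++ [false]) d && extB χ (s ++ [true]) d)) = true := by
        by_contra hcon
        push_neg at hcon
        refine hnotboth ⟨fun d => ?_, fun d => ?_⟩ <;>
        · have h2 : (extB χ (s ++ [false]) d && extB χ (s ++ [true]) d) = true := by
            simpa using hcon d
          rw [Bool.and_eq_true] at h2
          first
            | exact (extB_iff _ _).mp h2.1
            | exact (extB_iff _ _).mp h2.2
      set p : ℕ →. Bool := fun d =>
        Part.some (!(extB χ (s ++ [false]) d && extB χ (s ++ [true]) d)) with hp
      have hdom : (Nat.rfind p).Dom := by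
        rw [Nat.rfind_dom]
        obtain ⟨d, hd⟩ := hterm
        exact ⟨d, Part.mem_some_iff.mpr hd.symm, fun {m} _ => trivial⟩
      set d : ℕ := (Nat.rfind p).get hdom with hd
      have hdmem : d ∈ Nat.rfind p := Part.get_mem hdom
      have hspec : (!(extB χ (s ++ [false]) d && extB χ (s ++ [true]) d)) = true := by
        have := Nat.rfind_spec hdmem
        exact (Part.mem_some_iff.mp this).symm
      -- the computed bit agrees with the path
      have hbit : extB χ (s ++ [true]) d = b := by
        cases hbcase : b with
        | true =>
          rw [hbcase] at hchild
          exact (extB_iff _ _).mpr (hchild d)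
        | false =>
          rw [hbcase] at hchild
          have h0 : extB χ (s ++ [false]) d = true := (extB_iff _ _).mpr (hchild d)
          simp only [h0, Bool.true_and, Bool.not_eq_true', Bool.not_eq_false] at hspec
          exact hspec
      show (List.range (n₁ + (n + 1))).map A ∈ step χ s
      rw [step]
      refine (Part.mem_map_iff _).mpr ⟨d, hdmem, ?_⟩
      rw [hbit, show n₁ + (n + 1) = n₁ + n + 1 by omega, hsucc]
  -- the initial-segment function is computable
  have hLA : Computable fun n : ℕ => (List.range (n₁ + n)).map A :=
    Partrec.of_eq_tot (L_partrec hχ σ₀) memL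
  -- extract A
  have hA : Computable fun n : ℕ =>
      (((List.range (n₁ + (n + 1))).map A)[n]?).getD false :=
    Computable.option_getD
      (Computable.list_getElem?.comp (hLA.comp Computable.succ) Computable.id)
      (Computable.const false)
  refine hA.of_eq fun n => ?_
  have hn : n < n₁ + (n + 1) := by omega
  rw [List.getElem?_map, List.getElem?_range hn]
  rfl
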